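/- arXiv:2204.11557 — 2 statements merged into one kernel-verified Lean document; each statement's English description precedes it below -/
import Mathlib

section
/- Let δ > 0, λ₁ > 0, λ₂ < 0. The function W : ℝ × ℝ → ℝ defined by W(y,t) = (λ₁ − λ₂)^{-1} · exp(−(2δ/(λ₁ − λ₂)²)(−λ₁λ₂ t + ((λ₁ + λ₂)/2) y)) · ∑_{n=0}^∞ (1/(n!)²) ((δ² λ₁ λ₂/(λ₁ − λ₂)⁴)(y − λ₁ t)(y − λ₂ t))^n is smooth on all of ℝ², and it coincides with the kernel V on the region {(y,t) : t ≥ 0, λ₂ t ≤ y ≤ λ₁ t}; in particular V extends to a smooth function on ℝ². -/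
/-!
`W` is the entire power series `∑ xⁿ / (n!)²` (infinite radius by the ratio test) composed with
polynomials in `(y, t)`, hence smooth. On the region `λ₂t ≤ y ≤ λ₁t` both `-λ₁λ₂` and
`-(y - λ₁t)(y - λ₂t)` are nonnegative, so the square roots in `V` square back, and
`I₀(z) = ∑ (z² / 4)ⁿ / (n!)²` agrees with the series of `W` term by term.
-/

open MeasureTheory

/-- Modified Bessel function of the first kind, order 0. -/
noncomputable def besselI0 (x : ℝ) : ℝ :=
  ∑' n : ℕ, (1 / ((n.factorial : ℝ)) ^ 2) * (x / 2) ^ (2 * n)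

/-- The kernel `V` of the general damped wave equation (defined with `I₀` and square roots). -/
noncomputable def Vker (d l1 l2 y t : ℝ) : ℝ :=
  (l1 - l2)⁻¹ *
    Real.exp (-(2 * d / (l1 - l2) ^ 2) * (-(l1 * l2) * t + ((l1 + l2) / 2) * y)) *
    besselI0 ((2 * d * Real.sqrt (-(l1 * l2)) / (l1 - l2) ^ 2) *
      Real.sqrt (-((y - l1 * t) * (y - l2 * t))))

/-- The everywhere-defined power-series form `W` of the kernel. -/
noncomputable def Wker (d l1 l2 y t : ℝ) : ℝ :=
  (l1 - l2)⁻¹ *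
    Real.exp (-(2 * d / (l1 - l2) ^ 2) * (-(l1 * l2) * t + ((l1 + l2) / 2) * y)) *
    ∑' n : ℕ, (1 / ((n.factorial : ℝ)) ^ 2) *
      ((d ^ 2 * l1 * l2 / (l1 - l2) ^ 4) * ((y - l1 * t) * (y - l2 * t))) ^ n

open Filter FormalMultilinearSeries Nat

theorem FormalMultilinearSeries.contDiff_sum_of_radius_eq_top {𝕜 E F : Type*}
    [NontriviallyNormedField 𝕜] [NormedAddCommGroup E] [NormedSpace 𝕜 E]
    [NormedAddCommGroup F] [NormedSpace 𝕜 F] [CompleteSpace F]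
    (p : FormalMultilinearSeries 𝕜 E F) (hp : p.radius = ⊤) {n : WithTop ℕ∞} :
    ContDiff 𝕜 n p.sum := by
  have h := p.analyticOnNhd
  rw [hp, Metric.eball_top] at h
  exact h.contDiff

theorem radius_ofScalars_one_div_factorial_sq (E : Type*) [NormedRing E] [NormedAlgebra ℝ E] :
    (ofScalars E fun n ↦ 1 / (n ! : ℝ) ^ 2).radius = ⊤ := by
  refine ofScalars_radius_eq_top_of_tendsto E _ (.of_forall fun n ↦ by positivity) ?_
  have hratio (n : ℕ) :
      ‖1 / ((n + 1) ! : ℝ) ^ 2‖ / ‖1 / (n ! : ℝ) ^ 2‖ = (1 / ((n : ℝ) + 1)) ^ 2 := by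
    have : (n ! : ℝ) ≠ 0 := by positivity
    rw [Real.norm_of_nonneg (by positivity), Real.norm_of_nonneg (by positivity),
      factorial_succ, cast_mul]
    field_simp
    push_cast
    ring
  have hlim := (tendsto_one_div_add_atTop_nhds_zero_nat (𝕜 := ℝ)).pow 2
  rw [zero_pow two_ne_zero] at hlim
  exact hlim.congr fun n ↦ (hratio n).symm

theorem contDiff_tsum_one_div_factorial_sq_mul_pow {n : WithTop ℕ∞} :
    ContDiff ℝ n fun x : ℝ ↦ ∑' k : ℕ, 1 / (k ! : ℝ) ^ 2 * x ^ k := by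
  have hsum : (fun x : ℝ ↦ ∑' k : ℕ, 1 / (k ! : ℝ) ^ 2 * x ^ k) =
      ofScalarsSum (E := ℝ) fun k ↦ 1 / (k ! : ℝ) ^ 2 := by
    simp only [ofScalarsSum_eq_tsum, smul_eq_mul]
  rw [hsum]
  exact contDiff_sum_of_radius_eq_top _ (radius_ofScalars_one_div_factorial_sq ℝ)

theorem besselI0_eq_tsum (x : ℝ) :
    besselI0 x = ∑' n : ℕ, 1 / (n ! : ℝ) ^ 2 * (x ^ 2 / 4) ^ n := by
  refine tsum_congr fun n ↦ ?_
  rw [pow_mul, div_pow]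
  norm_num

theorem contDiff_Wker (d l1 l2 : ℝ) :
    ContDiff ℝ (⊤ : ℕ∞) fun p : ℝ × ℝ ↦ Wker d l1 l2 p.1 p.2 := by
  unfold Wker
  exact (contDiff_const.mul (Real.contDiff_exp.comp (by fun_prop))).mul
    (contDiff_tsum_one_div_factorial_sq_mul_pow.comp (by fun_prop))

theorem Wker_eq_Vker {d l1 l2 y t : ℝ} (hl : l1 * l2 ≤ 0)
    (hyt : (y - l1 * t) * (y - l2 * t) ≤ 0) : Wker d l1 l2 y t = Vker d l1 l2 y t := by
  have harg :
      (2 * d * √(-(l1 * l2)) / (l1 - l2) ^ 2 * √(-((y - l1 * t) * (y - l2 * t)))) ^ 2 / 4 =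
        d ^ 2 * l1 * l2 / (l1 - l2) ^ 4 * ((y - l1 * t) * (y - l2 * t)) := by
    rw [mul_pow, div_pow, mul_pow, Real.sq_sqrt (by linarith), Real.sq_sqrt (by linarith)]
    ring
  rw [Vker, besselI0_eq_tsum, harg, Wker]

theorem Vker_smooth_extension_general
    (d l1 l2 : ℝ) (hl1 : 0 < l1) (hl2 : l2 < 0) :
    ContDiff ℝ (⊤ : ℕ∞) (fun p : ℝ × ℝ => Wker d l1 l2 p.1 p.2)
      ∧ (∀ y t : ℝ, 0 ≤ t → l2 * t ≤ y → y ≤ l1 * t →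
          Wker d l1 l2 y t = Vker d l1 l2 y t) := by
  refine ⟨contDiff_Wker d l1 l2, fun y t _ hy₂ hy₁ ↦ Wker_eq_Vker ?_ ?_⟩
  · nlinarith
  · nlinarith

/-- The function `W` is smooth on all of `ℝ²` and coincides with the kernel `V` on the region
`{(y,t) : t ≥ 0, λ₂t ≤ y ≤ λ₁t}`; in particular `V` extends to a smooth function on `ℝ²`. -/
theorem Vker_smooth_extension
    (d l1 l2 : ℝ) (hd : 0 < d) (hl1 : 0 < l1) (hl2 : l2 < 0) :
    ContDiff ℝ (⊤ : ℕ∞) (fun p : ℝ × ℝ => Wker d l1 l2 p.1 p.2)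
      ∧ (∀ y t : ℝ, 0 ≤ t → l2 * t ≤ y → y ≤ l1 * t →
          Wker d l1 l2 y t = Vker d l1 l2 y t) :=
  Vker_smooth_extension_general d l1 l2 hl1 hl2
end

section
/- Let μ₁ > 0, μ₂ < 0, μ ∈ [μ₂, μ₁], a > 0, a₁ > 0, γ > 0 and let w : ℝ → [0,∞) be locally integrable. Define H(x,t) = ∫₀ᵗ e^{−a₁(t−s)} F_{a,γ,w}^{μ₁,μ₂}(x − μ(t−s), s) ds. Then there exists K(a₁, γ) > 0 such that, if 2 a μ² ≤ a₁, then for all x ∈ ℝ and t ≥ 0, H(x,t) ≤ K(a₁,γ) · F_{a,γ,w}^{μ₁,μ₂}(x,t). -/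
open MeasureTheory Set

/-- `F_{a,γ,w}^{μ₁,μ₂}(x,t) = (1+t)^{−γ} ∫_{μ₂t}^{μ₁t} e^{−ay²/(1+t)} w(x−y) dy`. -/
noncomputable def Fq (a γ : ℝ) (w : ℝ → ℝ) (μ1 μ2 x t : ℝ) : ℝ :=
  (1 + t) ^ (-γ) * ∫ y in μ2 * t..μ1 * t, Real.exp (-a * y ^ 2 / (1 + t)) * w (x - y)

private lemma exp_aux {a a1 μ s t z : ℝ} (ha : 0 < a) (hs : 0 ≤ s) (hst : s ≤ t)
    (h2a : 2 * a * μ ^ 2 ≤ a1) :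
    Real.exp (-a1 * (t - s)) * Real.exp (-a * (z - μ * (t - s)) ^ 2 / (1 + s)) ≤
      Real.exp (-(a1 / 2) * (t - s)) * Real.exp (-a * z ^ 2 / (1 + t)) := by
  rw [← Real.exp_add, ← Real.exp_add, Real.exp_le_exp]
  have hp : (0:ℝ) < 1 + s := by linarith
  have hP : (0:ℝ) < 1 + t := by linarith
  have hτ : (0:ℝ) ≤ t - s := by linarith
  have key : a * z ^ 2 / (1 + t) ≤ a * (z - μ * (t - s)) ^ 2 / (1 + s) + a1 / 2 * (t - s) := by
    rw [div_add' _ _ _ (ne_of_gt hp), div_le_div_iff₀ hP hp]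
    nlinarith [mul_nonneg (mul_nonneg ha.le hτ) (sq_nonneg (z - μ * (1 + t))),
      mul_nonneg (mul_nonneg (by linarith : (0:ℝ) ≤ a1 - 2 * a * μ ^ 2) hτ)
        (mul_nonneg hp.le hP.le)]
  rw [neg_mul, neg_mul, neg_mul, neg_mul, neg_div, neg_div]
  linarith

private lemma time_aux {a1 γ s t : ℝ} (ha1 : 0 < a1) (hγ : 0 < γ) (hs : 0 ≤ s) (hst : s ≤ t) :
    (1 + s) ^ (-γ) * Real.exp (-(a1 / 2) * (t - s)) ≤
      Real.exp (γ * (a1 / (4 * γ) - 1 - Real.log (a1 / (4 * γ)))) *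
        Real.exp (-(a1 / 4) * (t - s)) * (1 + t) ^ (-γ) := by
  set ε : ℝ := a1 / (4 * γ) with hεdef
  have hε : 0 < ε := by positivity
  set C : ℝ := Real.exp (γ * (ε - 1 - Real.log ε)) with hCdef
  have hp : (0:ℝ) < 1 + s := by linarith
  have hP : (0:ℝ) < 1 + t := by linarith
  have hτ : (0:ℝ) ≤ t - s := by linarith
  have hτ1 : (0:ℝ) < 1 + (t - s) := by linarith
  -- log bound
  have hlog : Real.log (1 + (t - s)) ≤ ε * (t - s) + (ε - 1 - Real.log ε) := by
    have h1 : Real.log (ε * (1 + (t - s))) ≤ ε * (1 + (t - s)) - 1 :=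
      Real.log_le_sub_one_of_pos (by positivity)
    rw [Real.log_mul hε.ne' hτ1.ne'] at h1
    nlinarith
  have hγε : γ * ε = a1 / 4 := by rw [hεdef]; field_simp
  have hpow : (1 + (t - s)) ^ γ ≤ C * Real.exp (a1 / 4 * (t - s)) := by
    rw [Real.rpow_def_of_pos hτ1, hCdef, ← Real.exp_add]
    apply Real.exp_le_exp.2
    calc Real.log (1 + (t - s)) * γ ≤ (ε * (t - s) + (ε - 1 - Real.log ε)) * γ :=
          mul_le_mul_of_nonneg_right hlog hγ.le
      _ = γ * (ε - 1 - Real.log ε) + a1 / 4 * (t - s) := by rw [← hγε]; ring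
  have hsplit : (1 + t) ^ γ ≤ (1 + s) ^ γ * (1 + (t - s)) ^ γ := by
    rw [← Real.mul_rpow hp.le hτ1.le]
    exact Real.rpow_le_rpow hP.le (by nlinarith) hγ.le
  have hS : (0:ℝ) < (1 + s) ^ γ := Real.rpow_pos_of_pos hp γ
  have hT : (0:ℝ) < (1 + t) ^ γ := Real.rpow_pos_of_pos hP γ
  have h3 : (1 + t) ^ γ * Real.exp (-(a1 / 2) * (t - s)) ≤
      C * Real.exp (-(a1 / 4) * (t - s)) * (1 + s) ^ γ := by
    calc (1 + t) ^ γ * Real.exp (-(a1 / 2) * (t - s))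
        ≤ ((1 + s) ^ γ * (1 + (t - s)) ^ γ) * Real.exp (-(a1 / 2) * (t - s)) :=
          mul_le_mul_of_nonneg_right hsplit (Real.exp_nonneg _)
      _ ≤ ((1 + s) ^ γ * (C * Real.exp (a1 / 4 * (t - s)))) * Real.exp (-(a1 / 2) * (t - s)) := by
          apply mul_le_mul_of_nonneg_right _ (Real.exp_nonneg _)
          exact mul_le_mul_of_nonneg_left hpow hS.le
      _ = C * (Real.exp (a1 / 4 * (t - s)) * Real.exp (-(a1 / 2) * (t - s))) * (1 + s) ^ γ := by
          ring
      _ = C * Real.exp (-(a1 / 4) * (t - s)) * (1 + s) ^ γ := by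
          rw [← Real.exp_add]; ring_nf
  rw [Real.rpow_neg hp.le, Real.rpow_neg hP.le, inv_mul_eq_div, div_le_iff₀ hS]
  have h4 := mul_le_mul_of_nonneg_left h3 (inv_nonneg.2 hT.le)
  rw [← mul_assoc, inv_mul_cancel₀ hT.ne', one_mul] at h4
  calc Real.exp (-(a1 / 2) * (t - s))
      ≤ ((1 + t) ^ γ)⁻¹ * (C * Real.exp (-(a1 / 4) * (t - s)) * (1 + s) ^ γ) := h4
    _ = C * Real.exp (-(a1 / 4) * (t - s)) * ((1 + t) ^ γ)⁻¹ * (1 + s) ^ γ := by ring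

/-- Lemma 3.1: `∫₀ᵗ e^{−a₁(t−s)} F_{a,γ,w}^{μ₁,μ₂}(x−μ(t−s), s) ds ≤ K(a₁,γ) F_{a,γ,w}^{μ₁,μ₂}(x,t)`
provided `a ≤ a₁/(2μ²)`. -/
theorem conv_exp_with_F
    (μ1 μ2 μ a a1 γ : ℝ) (hμ1 : 0 < μ1) (hμ2 : μ2 < 0)
    (hμl : μ2 ≤ μ) (hμr : μ ≤ μ1) (ha : 0 < a) (ha1 : 0 < a1) (hγ : 0 < γ)
    (w : ℝ → ℝ) (hw : ∀ x : ℝ, 0 ≤ w x) (hloc : LocallyIntegrable w) :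
    ∃ K : ℝ, 0 < K ∧ (2 * a * μ ^ 2 ≤ a1 →
      ∀ x t : ℝ, 0 ≤ t →
        (∫ s in (0:ℝ)..t, Real.exp (-a1 * (t - s)) * Fq a γ w μ1 μ2 (x - μ * (t - s)) s)
          ≤ K * Fq a γ w μ1 μ2 x t) := by
  set C : ℝ := Real.exp (γ * (a1 / (4 * γ) - 1 - Real.log (a1 / (4 * γ)))) with hCdef
  have hC : 0 < C := Real.exp_pos _
  refine ⟨C * (4 / a1), by positivity, ?_⟩
  intro h2a x t ht
  have hP : (0:ℝ) < 1 + t := by linarith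
  set G : ℝ → ℝ := fun z => Real.exp (-a * z ^ 2 / (1 + t)) * w (x - z) with hGdef
  have hGnn : ∀ z, 0 ≤ G z := fun z => mul_nonneg (Real.exp_nonneg _) (hw _)
  have hGint : ∀ A B : ℝ, IntervalIntegrable G volume A B := by
    intro A B
    have h1 : IntervalIntegrable w volume (x - A) (x - B) := by
      rw [intervalIntegrable_iff']
      exact hloc.integrableOn_isCompact isCompact_uIcc
    have hw' : IntervalIntegrable (fun z => w (x - z)) volume A B := by
      simpa using h1.comp_sub_left x
    exact hw'.continuousOn_mul (Continuous.continuousOn (by continuity))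
  set J : ℝ := ∫ z in μ2 * t..μ1 * t, G z with hJdef
  have hμ2t : μ2 * t ≤ μ1 * t := by nlinarith
  have hJ0 : 0 ≤ J := intervalIntegral.integral_nonneg hμ2t (fun z _ => hGnn z)
  have hFqt : Fq a γ w μ1 μ2 x t = (1 + t) ^ (-γ) * J := rfl
  -- pointwise bound on the outer integrand
  have hpoint : ∀ s : ℝ, 0 ≤ s → s ≤ t →
      Real.exp (-a1 * (t - s)) * Fq a γ w μ1 μ2 (x - μ * (t - s)) s ≤
        C * Real.exp (-(a1 / 4) * (t - s)) * ((1 + t) ^ (-γ) * J) := by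
    intro s hs hst
    have hp : (0:ℝ) < 1 + s := by linarith
    set A : ℝ := μ2 * s + μ * (t - s) with hAdef
    set B : ℝ := μ1 * s + μ * (t - s) with hBdef
    have hA : μ2 * t ≤ A := by rw [hAdef]; nlinarith
    have hB : B ≤ μ1 * t := by rw [hBdef]; nlinarith
    have hAB : A ≤ B := by rw [hAdef, hBdef]; nlinarith
    have hshift : (∫ y in μ2 * s..μ1 * s,
          Real.exp (-a * y ^ 2 / (1 + s)) * w (x - μ * (t - s) - y))
        = ∫ z in A..B, Real.exp (-a * (z - μ * (t - s)) ^ 2 / (1 + s)) * w (x - z) := by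
      rw [hAdef, hBdef, ← intervalIntegral.integral_comp_add_right
        (fun z => Real.exp (-a * (z - μ * (t - s)) ^ 2 / (1 + s)) * w (x - z)) (μ * (t - s))]
      apply intervalIntegral.integral_congr
      intro y _
      have e1 : y + μ * (t - s) - μ * (t - s) = y := by ring
      have e2 : x - (y + μ * (t - s)) = x - μ * (t - s) - y := by ring
      simp only [e1, e2]
    have hFqs : Fq a γ w μ1 μ2 (x - μ * (t - s)) s
        = (1 + s) ^ (-γ) *
            ∫ z in A..B, Real.exp (-a * (z - μ * (t - s)) ^ 2 / (1 + s)) * w (x - z) := by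
      rw [Fq, hshift]
    have step1 : Real.exp (-a1 * (t - s)) *
          (∫ z in A..B, Real.exp (-a * (z - μ * (t - s)) ^ 2 / (1 + s)) * w (x - z))
        ≤ Real.exp (-(a1 / 2) * (t - s)) * ∫ z in A..B, G z := by
      rw [← intervalIntegral.integral_const_mul, ← intervalIntegral.integral_const_mul,
        intervalIntegral.integral_of_le hAB, intervalIntegral.integral_of_le hAB]
      apply integral_mono_of_nonneg
      · filter_upwards with z
        exact mul_nonneg (Real.exp_nonneg _) (mul_nonneg (Real.exp_nonneg _) (hw _))
      · exact ((hGint A B).const_mul _).1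
      · filter_upwards with z
        calc Real.exp (-a1 * (t - s)) *
              (Real.exp (-a * (z - μ * (t - s)) ^ 2 / (1 + s)) * w (x - z))
            = (Real.exp (-a1 * (t - s)) * Real.exp (-a * (z - μ * (t - s)) ^ 2 / (1 + s))) *
                w (x - z) := by ring
          _ ≤ (Real.exp (-(a1 / 2) * (t - s)) * Real.exp (-a * z ^ 2 / (1 + t))) * w (x - z) :=
              mul_le_mul_of_nonneg_right (exp_aux ha hs hst h2a) (hw _)
          _ = Real.exp (-(a1 / 2) * (t - s)) * G z := by rw [hGdef]; ring
    have step2 : (∫ z in A..B, G z) ≤ J := by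
      rw [hJdef, intervalIntegral.integral_of_le hAB, intervalIntegral.integral_of_le hμ2t]
      apply setIntegral_mono_set ((hGint _ _).1)
      · filter_upwards with z using hGnn z
      · exact HasSubset.Subset.eventuallyLE (Ioc_subset_Ioc hA hB)
    have hrs : (0:ℝ) ≤ (1 + s) ^ (-γ) := Real.rpow_nonneg hp.le _
    calc Real.exp (-a1 * (t - s)) * Fq a γ w μ1 μ2 (x - μ * (t - s)) s
        = (1 + s) ^ (-γ) * (Real.exp (-a1 * (t - s)) *
            ∫ z in A..B, Real.exp (-a * (z - μ * (t - s)) ^ 2 / (1 + s)) * w (x - z)) := by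
          rw [hFqs]; ring
      _ ≤ (1 + s) ^ (-γ) * (Real.exp (-(a1 / 2) * (t - s)) * ∫ z in A..B, G z) :=
          mul_le_mul_of_nonneg_left step1 hrs
      _ ≤ (1 + s) ^ (-γ) * (Real.exp (-(a1 / 2) * (t - s)) * J) :=
          mul_le_mul_of_nonneg_left
            (mul_le_mul_of_nonneg_left step2 (Real.exp_nonneg _)) hrs
      _ = ((1 + s) ^ (-γ) * Real.exp (-(a1 / 2) * (t - s))) * J := by ring
      _ ≤ (C * Real.exp (-(a1 / 4) * (t - s)) * (1 + t) ^ (-γ)) * J :=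
          mul_le_mul_of_nonneg_right (time_aux ha1 hγ hs hst) hJ0
      _ = C * Real.exp (-(a1 / 4) * (t - s)) * ((1 + t) ^ (-γ) * J) := by ring
  -- nonnegativity of the outer integrand
  have hFq_nn : ∀ x' s : ℝ, 0 ≤ s → 0 ≤ Fq a γ w μ1 μ2 x' s := by
    intro x' s hs
    apply mul_nonneg (Real.rpow_nonneg (by linarith) _)
    exact intervalIntegral.integral_nonneg (by nlinarith)
      (fun y _ => mul_nonneg (Real.exp_nonneg _) (hw _))
  -- compare with the explicit integral
  have houter : (∫ s in (0:ℝ)..t, Real.exp (-a1 * (t - s)) * Fq a γ w μ1 μ2 (x - μ * (t - s)) s)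
      ≤ ∫ s in (0:ℝ)..t, C * Real.exp (-(a1 / 4) * (t - s)) * ((1 + t) ^ (-γ) * J) := by
    rw [intervalIntegral.integral_of_le ht, intervalIntegral.integral_of_le ht]
    apply integral_mono_of_nonneg
    · filter_upwards [ae_restrict_mem measurableSet_Ioc] with s hs
      exact mul_nonneg (Real.exp_nonneg _) (hFq_nn _ s hs.1.le)
    · apply Continuous.integrableOn_Ioc
      have hcont : Continuous fun s : ℝ => -(a1 / 4) * (t - s) := by fun_prop
      exact (continuous_const.mul (Real.continuous_exp.comp hcont)).mul continuous_const
    · filter_upwards [ae_restrict_mem measurableSet_Ioc] with s hs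
      exact hpoint s hs.1.le hs.2
  -- compute/bound the explicit integral
  have hexp : (∫ s in (0:ℝ)..t, Real.exp (-(a1 / 4) * (t - s))) ≤ 4 / a1 := by
    have h1 : (∫ s in (0:ℝ)..t, Real.exp (-(a1 / 4) * (t - s)))
        = ∫ u in (t - t)..(t - 0), Real.exp (-(a1 / 4) * u) := by
      rw [← intervalIntegral.integral_comp_sub_left (fun u => Real.exp (-(a1 / 4) * u)) t]
    have h2 : (∫ u in (0:ℝ)..t, Real.exp (-(a1 / 4) * u))
        = (-(a1 / 4))⁻¹ • ∫ v in (-(a1 / 4) * 0)..(-(a1 / 4) * t), Real.exp v := by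
      rw [← intervalIntegral.integral_comp_mul_left (fun v => Real.exp v)
        (neg_ne_zero.2 (by positivity : a1 / 4 ≠ 0))]
    have h3 : (∫ s in (0:ℝ)..t, Real.exp (-(a1 / 4) * (t - s)))
        = (-(a1 / 4))⁻¹ * (Real.exp (-(a1 / 4) * t) - Real.exp (-(a1 / 4) * 0)) := by
      rw [h1]
      simp only [sub_self, sub_zero]
      rw [h2, integral_exp, smul_eq_mul]
    rw [h3]
    have hinv : (-(a1 / 4))⁻¹ = -(4 / a1) := by rw [inv_neg, inv_div]
    rw [hinv]
    have hE : 0 < Real.exp (-(a1 / 4) * t) := Real.exp_pos _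
    have h4a1 : (0:ℝ) < 4 / a1 := by positivity
    simp only [mul_zero, Real.exp_zero]
    nlinarith [mul_pos h4a1 hE]
  -- assemble
  have hM : (0:ℝ) ≤ (1 + t) ^ (-γ) * J := mul_nonneg (Real.rpow_nonneg hP.le _) hJ0
  calc (∫ s in (0:ℝ)..t, Real.exp (-a1 * (t - s)) * Fq a γ w μ1 μ2 (x - μ * (t - s)) s)
      ≤ ∫ s in (0:ℝ)..t, C * Real.exp (-(a1 / 4) * (t - s)) * ((1 + t) ^ (-γ) * J) := houter
    _ = ∫ s in (0:ℝ)..t, (C * ((1 + t) ^ (-γ) * J)) * Real.exp (-(a1 / 4) * (t - s)) :=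
        intervalIntegral.integral_congr fun s _ => by ring
    _ = (C * ((1 + t) ^ (-γ) * J)) * ∫ s in (0:ℝ)..t, Real.exp (-(a1 / 4) * (t - s)) :=
        intervalIntegral.integral_const_mul _ _
    _ ≤ (C * ((1 + t) ^ (-γ) * J)) * (4 / a1) :=
        mul_le_mul_of_nonneg_left hexp (mul_nonneg hC.le hM)
    _ = C * (4 / a1) * Fq a γ w μ1 μ2 x t := by rw [hFqt]; ring
end
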